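/- One-step price monotonicity of saferAd-CP: for any mempool state st and any arriving transaction ta ∉ st, the sum of transaction prices does not decrease across a single admission step, i.e., Σ_{tx ∈ adTx(st, ta)} tx.price ≥ Σ_{tx ∈ st} tx.price. -/

import Mathlib

/-- A transaction: sender, nonce (naturals) and a nonnegative rational price. -/
structure Tx where
  sender : ℕ
  nonce : ℕ
  price : ℚ≥0
deriving DecidableEq

instance : DecidableRel ((· ≤ ·) : ℚ≥0 → ℚ≥0 → Prop) :=
  fun a b => decidable_of_iff ((a : ℚ) ≤ (b : ℚ)) (by exact_mod_cast Iff.rfl)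

/-- `tx₁` is an ancestor of `tx₂`. -/
def Ancestor (tx₁ tx₂ : Tx) : Prop :=
  tx₁.sender = tx₂.sender ∧ tx₁.nonce < tx₂.nonce

instance (tx₁ tx₂ : Tx) : Decidable (Ancestor tx₁ tx₂) :=
  decidable_of_iff (tx₁.sender = tx₂.sender ∧ tx₁.nonce < tx₂.nonce) Iff.rfl

/-- `te` is a childless transaction in the mempool state `st`. -/
def Childless (te : Tx) (st : Finset Tx) : Prop :=
  te ∈ st ∧ ∀ tx ∈ st, ¬ Ancestor te tx

/-- `pick` selects, from any nonempty mempool state, a childless transaction of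
minimum price among the childless transactions of the state. -/
def ValidPick (pick : Finset Tx → Tx) : Prop :=
  ∀ st : Finset Tx, st.Nonempty →
    Childless (pick st) st ∧ ∀ tx : Tx, Childless tx st → (pick st).price ≤ tx.price

/-- The saferAd-CP admission step with capacity `m`, eviction candidate chosen by `pick`. -/
def adTx (m : ℕ) (pick : Finset Tx → Tx) (st : Finset Tx) (ta : Tx) : Finset Tx :=
  if st.card < m then insert ta st
  else if ta.price ≤ (pick st).price then st
  else insert ta (st.erase (pick st))

/-- The state after processing the list of arriving transactions `ops` from `st₀`. -/
def run (m : ℕ) (pick : Finset Tx → Tx) (st₀ : Finset Tx) (ops : List Tx) : Finset Tx :=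
  ops.foldl (adTx m pick) st₀

theorem Finset.sum_le_sum_insert_erase {ι M : Type*} [DecidableEq ι] [AddCommMonoid M]
    [PartialOrder M] [IsOrderedAddMonoid M] [CanonicallyOrderedAdd M]
    {s : Finset ι} {a b : ι} {f : ι → M} (ha : a ∉ s) (hab : f b ≤ f a) :
    ∑ i ∈ s, f i ≤ ∑ i ∈ insert a (s.erase b), f i := by
  rw [Finset.sum_insert fun h => ha (Finset.mem_of_mem_erase h)]
  by_cases hb : b ∈ s
  · rw [← Finset.add_sum_erase s f hb]
    exact add_le_add_left hab _
  · rw [Finset.erase_eq_of_notMem hb]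
    exact le_add_self

theorem adTx_price_mono_general (m : ℕ) (pick : Finset Tx → Tx)
    (st : Finset Tx) (ta : Tx) (hta : ta ∉ st) :
    ∑ tx ∈ st, tx.price ≤ ∑ tx ∈ adTx m pick st ta, tx.price := by
  unfold adTx
  split_ifs with hcap hdeclined
  · exact Finset.sum_le_sum_of_subset (Finset.subset_insert _ _)
  · exact le_rfl
  · exact Finset.sum_le_sum_insert_erase hta (not_le.mp hdeclined).le

/-- One-step price monotonicity of saferAd-CP: the sum of
transaction prices does not decrease across a single admission step. -/
theorem adTx_price_mono (m : ℕ) (pick : Finset Tx → Tx) (hpick : ValidPick pick)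
    (st : Finset Tx) (ta : Tx) (hta : ta ∉ st) :
    ∑ tx ∈ st, tx.price ≤ ∑ tx ∈ adTx m pick st ta, tx.price :=
  adTx_price_mono_general m pick st ta hta
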